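/- arXiv:2411.18574 — 8 statements merged into one kernel-verified Lean document; each statement's English description precedes it below -/
import Mathlib

section
/- Let M : H → H be a bounded self-adjoint positive semidefinite linear operator on a real Hilbert space H, and let A : H → 2^H be maximal monotone. Then the resolvent J := (M+A)^{-1}M is M-cocoercive: for all (u,v), (u',v') in the graph of J, ⟨v − v', u − u'⟩_M ≥ ‖v − v'‖²_M, where ⟨a,b⟩_M := ⟨a, Mb⟩ and ‖a‖²_M := ⟨a, Ma⟩. -/
open scoped InnerProductSpace

theorem inner_sub_map_sub_sub_map_sub {𝕜 H F : Type*} [RCLike 𝕜] [NormedAddCommGroup H]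
    [InnerProductSpace 𝕜 H] [FunLike F H H] [AddMonoidHomClass F H H] (M : F) (u v u' v' : H) :
    ⟪v - v', (M u - M v) - (M u' - M v')⟫_𝕜 = ⟪v - v', M (u - u')⟫_𝕜 - ⟪v - v', M (v - v')⟫_𝕜 := by
  rw [← inner_sub_right, map_sub, map_sub]
  congr 1
  abel

theorem stmt3_general {H : Type*} [NormedAddCommGroup H] [InnerProductSpace ℝ H]
    (M : H →L[ℝ] H)
    (A : H → Set H)
    (hmono : ∀ u u' a a' : H, a ∈ A u → a' ∈ A u' → 0 ≤ (inner ℝ (a - a') (u - u') : ℝ))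
    (u v u' v' : H)
    (huv : M u - M v ∈ A v) (huv' : M u' - M v' ∈ A v') :
    (inner ℝ (v - v') (M (u - u')) : ℝ) ≥ (inner ℝ (v - v') (M (v - v')) : ℝ) := by
  have hA := hmono v v' _ _ huv huv'
  rw [real_inner_comm, inner_sub_map_sub_sub_map_sub] at hA
  exact sub_nonneg.mp hA

/-- The preconditioned resolvent `J = (M+A)⁻¹M` of a maximal monotone operator `A`
with a self-adjoint positive semidefinite preconditioner `M` is `M`-cocoercive:
for `(u,v), (u',v')` in the graph of `J` (i.e. `Mu − Mv ∈ A v`),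
`⟨v − v', u − u'⟩_M ≥ ‖v − v'‖²_M`. -/
theorem stmt3 {H : Type*} [NormedAddCommGroup H] [InnerProductSpace ℝ H] [CompleteSpace H]
    (M : H →L[ℝ] H)
    (hsa : ∀ x y : H, (inner ℝ (M x) y : ℝ) = inner ℝ x (M y))
    (hpsd : ∀ x : H, 0 ≤ (inner ℝ x (M x) : ℝ))
    (A : H → Set H)
    (hmono : ∀ u u' a a' : H, a ∈ A u → a' ∈ A u' → 0 ≤ (inner ℝ (a - a') (u - u') : ℝ))
    (hmax : ∀ u a : H,
      (∀ u' a' : H, a' ∈ A u' → 0 ≤ (inner ℝ (a - a') (u - u') : ℝ)) → a ∈ A u)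
    (u v u' v' : H)
    (huv : M u - M v ∈ A v) (huv' : M u' - M v' ∈ A v') :
    (inner ℝ (v - v') (M (u - u')) : ℝ) ≥ (inner ℝ (v - v') (M (v - v')) : ℝ) :=
  stmt3_general M A hmono u v u' v' huv huv'
end

section
/- Let T : H → H be any map on a real Hilbert space, let α ≥ 2, σ > 0, and let (x^k)_{k≥-1} satisfy, for all k ≥ 0, x^{k+1} = x^k + (1/(k+σ))(T(x^k) − x^k) + (1 − α/(k+σ))(T(x^k) − T(x^{k-1})). Then for all k ≥ 0, x^{k+1} = ε_k v + (1 − ε_k) T(x^k), where ε_k := (α−1)/(k+σ) and v := (σ−1)/(α−1) · (x^0 − T(x^{-1})) + T(x^{-1}). -/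
/-- The generalized Fast-KM iteration with `θ = 1` is a Halpern-type (anchored) method:
`x^{k+1} = ε_k v + (1 − ε_k) T(x^k)` with `ε_k = (α−1)/(k+σ)` and
`v = (σ−1)/(α−1)·(x⁰ − T(x⁻¹)) + T(x⁻¹)`. Here `x (k+1)` plays the role of `x^k`
(so `x 0 = x⁻¹`, `x 1 = x⁰`). -/
theorem stmt5 {H : Type*} [NormedAddCommGroup H] [NormedSpace ℝ H]
    (T : H → H) (α σ : ℝ) (hα : 2 ≤ α) (hσ : 0 < σ)
    (x : ℕ → H)
    (hrec : ∀ k : ℕ, x (k + 2) = x (k + 1)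
      + ((1 : ℝ) / ((k : ℝ) + σ)) • (T (x (k + 1)) - x (k + 1))
      + (1 - α / ((k : ℝ) + σ)) • (T (x (k + 1)) - T (x k))) :
    ∀ k : ℕ, x (k + 2) =
      ((α - 1) / ((k : ℝ) + σ)) • (((σ - 1) / (α - 1)) • (x 1 - T (x 0)) + T (x 0))
        + (1 - (α - 1) / ((k : ℝ) + σ)) • T (x (k + 1)) := by
  have hα1 : α - 1 ≠ 0 := by nlinarith
  intro k
  induction k with
  | zero =>
      have hσ0 : (0 : ℝ) + σ ≠ 0 := by positivity
      rw [hrec 0]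
      match_scalars <;> field_simp <;> ring
  | succ n ih =>
      have h1 : (n : ℝ) + σ ≠ 0 := by positivity
      have h2 : ((n : ℝ) + 1) + σ ≠ 0 := by positivity
      have h2' : (((n : ℕ) + 1 : ℕ) : ℝ) + σ ≠ 0 := by push_cast; exact h2
      rw [hrec (n + 1), ih]
      push_cast
      match_scalars <;> field_simp <;> ring
end

section
/- Let H = ℂ viewed as a real Hilbert space, α = 3, Q(x) = i·x (the 90° rotation, which is monotone and Lipschitz). For any constants c₁, c₂ ∈ ℝ, the function x(t) = c₁(1 − i t)/t² + c₂ e^{−i t}/t² solves the second-order equation ẍ(t) + (3/t)ẋ(t) + d/dt Q(x(t)) + (1/t)Q(x(t)) = 0 for all t > 0. -/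
/-!
Write `x = N / t²`. Then `t³ (ẍ + (3/t) ẋ + d/dt (i x) + (i/t) x) = t M' − M` with `M = N' + i N`,
so `x` solves the equation exactly when `M` is linear in `t`. For
`N = c₁ (1 − i t) + c₂ e^{−i t}` the exponential cancels in `M`, which is `c₁ t`.
-/

open Complex Filter Topology

lemma HasDerivAt.div_ofReal_pow {f : ℝ → ℂ} {f' : ℂ} {t : ℝ} (hf : HasDerivAt f f' t)
    (ht : t ≠ 0) (n : ℕ) :
    HasDerivAt (fun s : ℝ => f s / (s : ℂ) ^ n) (f' / t ^ n - n * f t / t ^ (n + 1)) t := by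
  have htC : (t : ℂ) ≠ 0 := ofReal_ne_zero.mpr ht
  refine (hf.div (hasDerivAt_pow n (t : ℂ)).comp_ofReal (pow_ne_zero n htC)).congr_deriv ?_
  cases n with
  | zero => simp
  | succ n => field_simp; push_cast; ring

section Reduction

variable {N N' N'' : ℝ → ℂ} {x : ℝ → ℂ}

theorem ode_residual_of_eq_div_sq (hN : ∀ s, HasDerivAt N (N' s) s)
    (hN' : ∀ s, HasDerivAt N' (N'' s) s) (hx : x = fun s : ℝ => N s / (s : ℂ) ^ 2)
    {t : ℝ} (ht : t ≠ 0) :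
    deriv (deriv x) t + (3 / (t : ℂ)) * deriv x t + deriv (fun s : ℝ => I * x s) t
        + (1 / (t : ℂ)) * (I * x t)
      = (t * (N'' t + I * N' t) - (N' t + I * N t)) / (t : ℂ) ^ 3 := by
  subst hx
  have hx' : ∀ s : ℝ, s ≠ 0 → HasDerivAt (fun s : ℝ => N s / (s : ℂ) ^ 2)
      (N' s / (s : ℂ) ^ 2 - 2 * N s / (s : ℂ) ^ 3) s := fun s hs => by
    simpa using (hN s).div_ofReal_pow hs 2
  have hderiv : deriv (fun s : ℝ => N s / (s : ℂ) ^ 2)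
      =ᶠ[𝓝 t] fun s : ℝ => N' s / (s : ℂ) ^ 2 - 2 * (N s / (s : ℂ) ^ 3) := by
    filter_upwards [eventually_ne_nhds ht] with s hs
    rw [(hx' s hs).deriv, mul_div_assoc]
  have hx'' := ((hN' t).div_ofReal_pow ht 2).fun_sub (((hN t).div_ofReal_pow ht 3).const_mul 2)
  rw [hderiv.deriv_eq, hx''.deriv, ((hx' t ht).const_mul I).deriv, (hx' t ht).deriv]
  have htC : (t : ℂ) ≠ 0 := ofReal_ne_zero.mpr ht
  field_simp
  push_cast
  ring

theorem ode_residual_eq_zero_of_add_I_mul_eq (c : ℂ) (hN : ∀ s, HasDerivAt N (N' s) s)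
    (hM : ∀ s : ℝ, N' s + I * N s = c * s) (hx : x = fun s : ℝ => N s / (s : ℂ) ^ 2)
    {t : ℝ} (ht : t ≠ 0) :
    deriv (deriv x) t + (3 / (t : ℂ)) * deriv x t + deriv (fun s : ℝ => I * x s) t
        + (1 / (t : ℂ)) * (I * x t) = 0 := by
  have hN'_eq : N' = fun s : ℝ => c * s - I * N s := funext fun s => eq_sub_of_add_eq (hM s)
  have hN' : ∀ s, HasDerivAt N' (c - I * N' s) s := fun s => by
    have := ((hasDerivAt_id s).ofReal_comp.const_mul c).fun_sub ((hN s).const_mul I)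
    simpa [← hN'_eq] using this
  rw [ode_residual_of_eq_div_sq hN hN' hx ht, hM t]
  ring

end Reduction

/-- With `Q(x) = i x` on `ℂ` and `α = 3`, `x(t) = c₁(1 − it)/t² + c₂ e^{−it}/t²` solves
`ẍ + (3/t)ẋ + d/dt(ix) + (1/t)(ix) = 0` for `t > 0` (edge case `θ = 1`). -/
theorem stmt9 (c₁ c₂ : ℝ) (x : ℝ → ℂ)
    (hx : ∀ t : ℝ, x t = (c₁ * (1 - Complex.I * t)) / t ^ 2
      + (c₂ * Complex.exp (-(Complex.I * t))) / t ^ 2) :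
    ∀ t : ℝ, 0 < t →
      deriv (deriv x) t + (3 / (t : ℂ)) * deriv x t
        + deriv (fun s : ℝ => Complex.I * x s) t + (1 / (t : ℂ)) * (Complex.I * x t) = 0 := by
  intro t ht
  have hN : ∀ s : ℝ, HasDerivAt (fun s : ℝ => c₁ * (1 - I * s) + c₂ * exp (-(I * s)))
      (-(c₁ * I) - c₂ * I * exp (-(I * s))) s := fun s => by
    have hs := (hasDerivAt_id s).ofReal_comp.const_mul I
    refine (((hs.const_sub 1).const_mul (c₁ : ℂ)).fun_add
      (hs.fun_neg.cexp.const_mul (c₂ : ℂ))).congr_deriv ?_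
    simp only [id, ofReal_one]
    ring
  refine ode_residual_eq_zero_of_add_I_mul_eq c₁ hN (fun s => ?_) (funext fun s => ?_) ht.ne'
  · linear_combination (-(c₁ : ℂ) * s) * I_sq
  · rw [hx, add_div]
end

section
/- With x(t) = c₁(1 − i t)/t² + c₂ e^{−i t}/t² and c₁ ≠ 0, the quantity t‖x(t)‖ does not tend to 0 as t → ∞; in fact, t‖x(t)‖ ≥ |c₁|/2 for all sufficiently large t. Consequently ‖Q(x(t))‖ = ‖x(t)‖ is not o(t^{-1}). -/
open Filter Topology Complex

/-! Since `t x(t) = c₁/t - i c₁ + c₂ e^{-it}/t` and `e^{-it}` is bounded, `t x(t) → -i c₁`;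
hence `t ‖x(t)‖ → |c₁| > 0`. -/

theorem tendsto_ofReal_inv_atTop_zero :
    Tendsto (fun t : ℝ => (t : ℂ)⁻¹) atTop (𝓝 0) := by
  simpa only [ofReal_inv, ofReal_zero] using tendsto_inv_atTop_zero.ofReal

theorem tendsto_ofReal_mul_div_sq (a : ℂ) {g : ℝ → ℂ}
    (hg : IsBoundedUnder (· ≤ ·) atTop (norm ∘ g)) :
    Tendsto (fun t : ℝ => (t : ℂ) * (a * (1 - I * t) / t ^ 2 + g t / t ^ 2)) atTop
      (𝓝 (-(a * I))) := by
  have hlim : Tendsto (fun t : ℝ => a * (t : ℂ)⁻¹ - a * I + g t * (t : ℂ)⁻¹) atTop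
      (𝓝 (a * 0 - a * I + 0)) :=
    ((tendsto_ofReal_inv_atTop_zero.const_mul a).sub_const _).add
      (isBoundedUnder_le_mul_tendsto_zero hg tendsto_ofReal_inv_atTop_zero)
  rw [mul_zero, zero_sub, add_zero] at hlim
  refine hlim.congr' ((eventually_ne_atTop 0).mono fun t ht => ?_)
  have ht' : (t : ℂ) ≠ 0 := ofReal_ne_zero.2 ht
  field_simp

theorem tendsto_mul_norm_div_sq (a : ℂ) {g : ℝ → ℂ}
    (hg : IsBoundedUnder (· ≤ ·) atTop (norm ∘ g)) :
    Tendsto (fun t : ℝ => t * ‖a * (1 - I * t) / t ^ 2 + g t / t ^ 2‖) atTop (𝓝 ‖a‖) := by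
  have h := (tendsto_ofReal_mul_div_sq a hg).norm
  rw [norm_neg, norm_mul, norm_I, mul_one] at h
  refine h.congr' ((eventually_ge_atTop 0).mono fun t ht => ?_)
  rw [norm_mul, norm_real, Real.norm_of_nonneg ht]

theorem isBoundedUnder_norm_mul_exp_neg_I_mul (b : ℂ) :
    IsBoundedUnder (· ≤ ·) atTop (norm ∘ fun t : ℝ => b * exp (-(I * t))) :=
  isBoundedUnder_of ⟨‖b‖, fun t => by simp [norm_exp]⟩

/-- For `x(t) = c₁(1 − it)/t² + c₂ e^{−it}/t²` with `c₁ ≠ 0`, one has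
`t‖x(t)‖ ≥ |c₁|/2` for all large `t`; in particular `‖Q(x(t))‖ = ‖x(t)‖` is not `o(t⁻¹)`. -/
theorem stmt11 (c₁ c₂ : ℝ) (hc₁ : c₁ ≠ 0) (x : ℝ → ℂ)
    (hx : ∀ t : ℝ, x t = (c₁ * (1 - Complex.I * t)) / t ^ 2
      + (c₂ * Complex.exp (-(Complex.I * t))) / t ^ 2) :
    (∃ T : ℝ, ∀ t ≥ T, |c₁| / 2 ≤ t * ‖x t‖) ∧
      ¬ Filter.Tendsto (fun t : ℝ => t * ‖x t‖) Filter.atTop (nhds 0) := by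
  have hlim : Tendsto (fun t => t * ‖x t‖) atTop (𝓝 |c₁|) := by
    simpa only [hx, norm_real, Real.norm_eq_abs] using
      tendsto_mul_norm_div_sq c₁ (isBoundedUnder_norm_mul_exp_neg_I_mul c₂)
  refine ⟨eventually_atTop.1 (hlim.eventually_const_le (half_lt_self (abs_pos.2 hc₁))),
    fun h0 => hc₁ ?_⟩
  exact abs_eq_zero.1 (tendsto_nhds_unique hlim h0)
end

section
/- Let Q : H → H be monotone and Lipschitz and let x : [t₀,∞) → H, t₀ > 0, be a strong solution of ẍ(t) + (α/t)ẋ(t) + β(t)·(d/dt)Q(x(t)) + b(t)Q(x(t)) = 0 where b(t) := β'(t) + β(t)/t and β(t) := β₀ t^{α−2}, with α > 1 and β₀ > 0. Then x satisfies the first-order (Tikhonov-regularized) equation ẋ(t) + β₀ t^{α−2} Q(x(t)) + ((α−1)/t)(x(t) − v) = 0 for all t ≥ t₀, where v := (t₀/(α−1))(ẋ(t₀) + β(t₀)Q(x(t₀))) + x(t₀). -/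
/-!
Multiplying the equation by `t` turns it into an exact derivative: for any differentiable `β`,
`d/dt [t (ẋ + β Q(x)) + (α - 1) x] = t (ẍ + (α/t) ẋ + β d/dt Q(x) + (β' + β/t) Q(x))`.
So `t (ẋ + β Q(x)) + (α - 1) x` is constant on `[t₀, ∞)`, and dividing the resulting identity
by `t` gives the first-order equation, with anchor `v` read off at `t = t₀`.
-/

section FirstIntegral

variable {E : Type*} [NormedAddCommGroup E] [NormedSpace ℝ E]

def firstIntegral (α : ℝ) (β : ℝ → ℝ) (x x' y : ℝ → E) (t : ℝ) : E :=
  t • (x' t + β t • y t) + (α - 1) • x t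

theorem hasDerivAt_firstIntegral {α b t : ℝ} {β : ℝ → ℝ} {x x' x'' y y' : ℝ → E} (ht : t ≠ 0)
    (hx : HasDerivAt x (x' t) t) (hx' : HasDerivAt x' (x'' t) t)
    (hy : HasDerivAt y (y' t) t) (hβ : HasDerivAt β b t) :
    HasDerivAt (firstIntegral α β x x' y)
      (t • (x'' t + (α / t) • x' t + β t • y' t + (b + β t / t) • y t)) t := by
  refine (((hasDerivAt_id t).smul (hx'.add (hβ.smul hy))).add
    (hx.const_smul (α - 1))).congr_deriv ?_
  simp only [id_eq, Pi.add_apply, Pi.smul_apply', smul_add, smul_smul]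
  match_scalars <;> field_simp
  ring

theorem firstIntegral_eq_of_ode {α t₀ : ℝ} {β : ℝ → ℝ} {x x' x'' y y' : ℝ → E} (ht₀ : 0 < t₀)
    (hx : ∀ t ≥ t₀, HasDerivAt x (x' t) t) (hx' : ∀ t ≥ t₀, HasDerivAt x' (x'' t) t)
    (hy : ∀ t ≥ t₀, HasDerivAt y (y' t) t) (hβ : ∀ t ≥ t₀, DifferentiableAt ℝ β t)
    (hode : ∀ t ≥ t₀,
      x'' t + (α / t) • x' t + β t • y' t + (deriv β t + β t / t) • y t = 0) :
    ∀ t ≥ t₀, firstIntegral α β x x' y t = firstIntegral α β x x' y t₀ := by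
  have hderiv : ∀ t ≥ t₀, HasDerivAt (firstIntegral α β x x' y) 0 t := fun t ht => by
    simpa only [hode t ht, smul_zero] using
      hasDerivAt_firstIntegral (α := α) (ht₀.trans_le ht).ne' (hx t ht)
        (hx' t ht) (hy t ht) (hβ t ht).hasDerivAt
  intro t ht
  exact constant_of_has_deriv_right_zero
    (fun s hs => (hderiv s hs.1).continuousAt.continuousWithinAt)
    (fun s hs => (hderiv s hs.1).hasDerivWithinAt) t ⟨ht, le_rfl⟩

theorem add_smul_sub_eq_zero_of_firstIntegral_eq {α t t₀ : ℝ} {β : ℝ → ℝ} {x x' y : ℝ → E}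
    (ht : t ≠ 0) (hα : α ≠ 1)
    (h : firstIntegral α β x x' y t = firstIntegral α β x x' y t₀) :
    x' t + β t • y t
      + ((α - 1) / t) • (x t - ((t₀ / (α - 1)) • (x' t₀ + β t₀ • y t₀) + x t₀)) = 0 := by
  have hα' : α - 1 ≠ 0 := sub_ne_zero.mpr hα
  rw [← smul_right_injective E ht |>.eq_iff, smul_zero, ← sub_eq_zero.mpr h]
  simp only [firstIntegral]
  match_scalars <;> field_simp

end FirstIntegral

theorem stmt14_general {H : Type*} [NormedAddCommGroup H] [InnerProductSpace ℝ H]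
    (Q : H → H)
    (α β₀ t₀ : ℝ) (hα : 1 < α) (ht₀ : 0 < t₀)
    (β : ℝ → ℝ) (hβ : ∀ t : ℝ, β t = β₀ * t ^ (α - 2))
    (x x' x'' q' : ℝ → H)
    (hx : ∀ t ≥ t₀, HasDerivAt x (x' t) t)
    (hx' : ∀ t ≥ t₀, HasDerivAt x' (x'' t) t)
    (hq : ∀ t ≥ t₀, HasDerivAt (fun s => Q (x s)) (q' t) t)
    (hode : ∀ t ≥ t₀,
      x'' t + (α / t) • x' t + β t • q' t + (deriv β t + β t / t) • Q (x t) = 0) :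
    ∀ t ≥ t₀, x' t + (β₀ * t ^ (α - 2)) • Q (x t)
      + ((α - 1) / t) • (x t - ((t₀ / (α - 1)) • (x' t₀ + β t₀ • Q (x t₀)) + x t₀)) = 0 := by
  have hβ_diff : ∀ t ≥ t₀, DifferentiableAt ℝ β t := fun t ht => by
    rw [funext hβ]
    exact ((Real.hasDerivAt_rpow_const (Or.inl (ht₀.trans_le ht).ne')).const_mul
      β₀).differentiableAt
  intro t ht
  rw [← hβ t]
  exact add_smul_sub_eq_zero_of_firstIntegral_eq (y := fun s => Q (x s)) (ht₀.trans_le ht).ne'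
    hα.ne' (firstIntegral_eq_of_ode ht₀ hx hx' hq hβ_diff hode t ht)

/-- When `β(t) = β₀ t^{α−2}` saturates the growth condition and
`b(t) = β'(t) + β(t)/t`, the second-order system reduces to the Tikhonov-regularized
first-order flow `ẋ + β₀ t^{α−2} Q(x) + ((α−1)/t)(x − v) = 0`. -/
theorem stmt14 {H : Type*} [NormedAddCommGroup H] [InnerProductSpace ℝ H] [CompleteSpace H]
    (Q : H → H) (L : NNReal)
    (hmono : ∀ u v : H, 0 ≤ (inner ℝ (Q u - Q v) (u - v) : ℝ))
    (hLip : LipschitzWith L Q)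
    (α β₀ t₀ : ℝ) (hα : 1 < α) (hβ₀ : 0 < β₀) (ht₀ : 0 < t₀)
    (β : ℝ → ℝ) (hβ : ∀ t : ℝ, β t = β₀ * t ^ (α - 2))
    (x x' x'' q' : ℝ → H)
    (hx : ∀ t ≥ t₀, HasDerivAt x (x' t) t)
    (hx' : ∀ t ≥ t₀, HasDerivAt x' (x'' t) t)
    (hq : ∀ t ≥ t₀, HasDerivAt (fun s => Q (x s)) (q' t) t)
    (hode : ∀ t ≥ t₀,
      x'' t + (α / t) • x' t + β t • q' t + (deriv β t + β t / t) • Q (x t) = 0) :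
    ∀ t ≥ t₀, x' t + (β₀ * t ^ (α - 2)) • Q (x t)
      + ((α - 1) / t) • (x t - ((t₀ / (α - 1)) • (x' t₀ + β t₀ • Q (x t₀)) + x t₀)) = 0 :=
  stmt14_general Q α β₀ t₀ hα ht₀ β hβ x x' x'' q' hx hx' hq hode
end

section
/- Let (q_k) be a nonnegative real sequence and t_k := k − 1 + σ with σ > 0 and α > 2. If the limit of q_k + (t_{k-1}/(α−1))(q_{k+1} − q_k) exists in ℝ as k → ∞ and (q_k) is bounded below, then lim_{k→∞} q_k exists in ℝ. -/
/-- Discrete Opial-type auxiliary lemma: if `q_k ≥ 0` and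
`q_k + (t_{k−1}/(α−1))(q_{k+1} − q_k)` converges with `t_k = k − 1 + σ`, `α > 2`,
`σ > 0`, then `q_k` converges. -/
theorem stmt17 (α σ : ℝ) (hα : 2 < α) (hσ : 0 < σ)
    (q : ℕ → ℝ) (hq : ∀ k, 0 ≤ q k) (hbdd : BddBelow (Set.range q))
    (hlim : ∃ ℓ : ℝ, Filter.Tendsto
      (fun k : ℕ => q k + (((k : ℝ) - 2 + σ) / (α - 1)) * (q (k + 1) - q k))
      Filter.atTop (nhds ℓ)) :
    ∃ L : ℝ, Filter.Tendsto q Filter.atTop (nhds L) := by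
  classical
  obtain ⟨ℓ, hℓ⟩ := hlim
  refine ⟨ℓ, ?_⟩
  rw [Metric.tendsto_atTop]
  intro ε hε
  set β : ℝ := α - 1 with hβdef
  have hβ : 1 < β := by simp only [hβdef]; linarith
  set c : ℕ → ℝ := fun k => (k : ℝ) - 2 + σ with hcdef
  set h : ℕ → ℝ := fun k => q k + (c k / β) * (q (k + 1) - q k) with hhdef
  set f : ℕ → ℝ := fun k => β / c k with hfdef
  set δ : ℝ := ε / 2 with hδdef
  have hδ : 0 < δ := by positivity
  -- threshold for c k ≥ β
  obtain ⟨K0, hK0⟩ := exists_nat_gt (β + 2 - σ)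
  have hcβ : ∀ k, K0 ≤ k → β ≤ c k := by
    intro k hk
    have : (K0 : ℝ) ≤ (k : ℝ) := by exact_mod_cast hk
    simp only [hcdef]; linarith
  have hcpos : ∀ k, K0 ≤ k → 0 < c k := fun k hk => lt_of_lt_of_le (by linarith) (hcβ k hk)
  have hfpos : ∀ k, K0 ≤ k → 0 < f k := fun k hk => div_pos (by linarith) (hcpos k hk)
  have hfle1 : ∀ k, K0 ≤ k → f k ≤ 1 := by
    intro k hk
    rw [hfdef, div_le_one (hcpos k hk)]
    exact hcβ k hk
  -- convergence of h
  obtain ⟨N1, hN1⟩ := Metric.tendsto_atTop.1 hℓ (δ / 2) (by positivity)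
  have hh' : ∀ k, N1 ≤ k → |h k - ℓ| < δ / 2 := by
    intro k hk
    have := hN1 k hk
    rwa [Real.dist_eq] at this
  set N0 : ℕ := max K0 N1 with hN0def
  have hN0K0 : K0 ≤ N0 := le_max_left _ _
  have hN0N1 : N1 ≤ N0 := le_max_right _ _
  -- key recurrence
  have key : ∀ k, K0 ≤ k → q (k + 1) - q k = f k * (h k - q k) := by
    intro k hk
    have hc0 : c k ≠ 0 := ne_of_gt (hcpos k hk)
    have hb0 : β ≠ 0 := by linarith
    simp only [hhdef, hfdef]
    field_simp
    ring
  -- comparison sequence for divergence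
  set m : ℕ := ⌈σ⌉₊ with hmdef
  have hσm : σ ≤ (m : ℝ) := Nat.le_ceil σ
  have hfge : ∀ j : ℕ, f (N0 + j) ≥ 1 / ((j : ℝ) + (N0 + m)) := by
    intro j
    have hk : K0 ≤ N0 + j := le_trans hN0K0 (Nat.le_add_right _ _)
    have hc1 : 0 < c (N0 + j) := hcpos _ hk
    have hc2 : c (N0 + j) ≤ (j : ℝ) + (N0 + m) := by
      simp only [hcdef]
      push_cast
      linarith
    have h1 : 1 / ((j : ℝ) + (N0 + m)) ≤ 1 / c (N0 + j) := by
      apply one_div_le_one_div_of_le hc1 hc2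
    have h2 : 1 / c (N0 + j) ≤ β / c (N0 + j) := by
      rw [div_le_div_iff_of_pos_right hc1]
      linarith
    linarith
  have hdiv : Filter.Tendsto (fun M => ∑ j ∈ Finset.range M, f (N0 + j))
      Filter.atTop Filter.atTop := by
    have hns : ¬ Summable (fun j : ℕ => 1 / ((j : ℝ) + (N0 + m))) := by
      intro hs
      have : Summable (fun j : ℕ => 1 / ((j + (N0 + m) : ℕ) : ℝ)) := by
        convert hs using 2 with j
        push_cast; ring
      exact Real.not_summable_one_div_natCast ((summable_nat_add_iff (N0 + m)).mp this)
    have hpos : ∀ j : ℕ, 0 ≤ 1 / ((j : ℝ) + (N0 + m)) := by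
      intro j; positivity
    have hten := (not_summable_iff_tendsto_nat_atTop_of_nonneg hpos).mp hns
    refine Filter.tendsto_atTop_mono (fun M => ?_) hten
    exact Finset.sum_le_sum fun j _ => hfge j
  clear_value β c h f δ m N0
  -- Entry from below: there exists k ≥ N0 with q k ≥ ℓ - δ
  have entry_low : ∃ k, N0 ≤ k ∧ ℓ - δ ≤ q k := by
    by_contra hcon
    push_neg at hcon
    have hstep : ∀ M : ℕ,
        q N0 + (δ / 2) * ∑ j ∈ Finset.range M, f (N0 + j) ≤ q (N0 + M) := by
      intro M
      induction M with
      | zero => simp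
      | succ M ih =>
        have hk : K0 ≤ N0 + M := le_trans hN0K0 (Nat.le_add_right _ _)
        have hk1 : N1 ≤ N0 + M := le_trans hN0N1 (Nat.le_add_right _ _)
        have hkey := key (N0 + M) hk
        have hhb := hh' (N0 + M) hk1
        have hqb := hcon (N0 + M) (Nat.le_add_right _ _)
        have habs := abs_lt.mp hhb
        have hfp := hfpos (N0 + M) hk
        have hgap : δ / 2 ≤ h (N0 + M) - q (N0 + M) := by linarith
        have : f (N0 + M) * (δ / 2) ≤ f (N0 + M) * (h (N0 + M) - q (N0 + M)) :=
          mul_le_mul_of_nonneg_left hgap (le_of_lt hfp)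
        rw [Finset.sum_range_succ]
        have : q (N0 + M) + (δ / 2) * f (N0 + M) ≤ q (N0 + (M + 1)) := by
          have heq : q (N0 + (M + 1)) = q (N0 + M) + f (N0 + M) * (h (N0 + M) - q (N0 + M)) := by
            have : N0 + (M + 1) = (N0 + M) + 1 := by ring
            rw [this]; linarith [hkey]
          rw [heq]; nlinarith
        linarith
    obtain ⟨M, hM⟩ := (Filter.tendsto_atTop.mp hdiv ((ℓ - δ - q N0) / (δ / 2))).exists
    have h1 := hstep M
    have h2 := hcon (N0 + M) (Nat.le_add_right _ _)
    have h3 : ℓ - δ - q N0 ≤ (δ / 2) * ∑ j ∈ Finset.range M, f (N0 + j) := by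
      rw [div_le_iff₀ (by positivity)] at hM
      linarith [hM]
    linarith
  -- Entry from above: there exists k ≥ N0 with q k ≤ ℓ + δ
  have entry_high : ∃ k, N0 ≤ k ∧ q k ≤ ℓ + δ := by
    by_contra hcon
    push_neg at hcon
    have hstep : ∀ M : ℕ,
        q (N0 + M) ≤ q N0 - (δ / 2) * ∑ j ∈ Finset.range M, f (N0 + j) := by
      intro M
      induction M with
      | zero => simp
      | succ M ih =>
        have hk : K0 ≤ N0 + M := le_trans hN0K0 (Nat.le_add_right _ _)
        have hk1 : N1 ≤ N0 + M := le_trans hN0N1 (Nat.le_add_right _ _)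
        have hkey := key (N0 + M) hk
        have hhb := hh' (N0 + M) hk1
        have hqb := hcon (N0 + M) (Nat.le_add_right _ _)
        have habs := abs_lt.mp hhb
        have hfp := hfpos (N0 + M) hk
        have hgap : h (N0 + M) - q (N0 + M) ≤ -(δ / 2) := by linarith
        have hmul : f (N0 + M) * (h (N0 + M) - q (N0 + M)) ≤ f (N0 + M) * (-(δ / 2)) :=
          mul_le_mul_of_nonneg_left hgap (le_of_lt hfp)
        rw [Finset.sum_range_succ]
        have heq : q (N0 + (M + 1)) = q (N0 + M) + f (N0 + M) * (h (N0 + M) - q (N0 + M)) := by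
          have : N0 + (M + 1) = (N0 + M) + 1 := by ring
          rw [this]; linarith [hkey]
        rw [heq]; nlinarith
    obtain ⟨M, hM⟩ := (Filter.tendsto_atTop.mp hdiv ((q N0 + 1) / (δ / 2))).exists
    have h1 := hstep M
    have h2 := hq (N0 + M)
    have h3 : q N0 + 1 ≤ (δ / 2) * ∑ j ∈ Finset.range M, f (N0 + j) := by
      rw [div_le_iff₀ (by positivity)] at hM
      linarith [hM]
    linarith
  -- invariance
  have inv_high : ∀ k, N0 ≤ k → q k ≤ ℓ + δ → q (k + 1) ≤ ℓ + δ := by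
    intro k hk hqk
    have hkK : K0 ≤ k := le_trans hN0K0 hk
    have hkN : N1 ≤ k := le_trans hN0N1 hk
    have hkey := key k hkK
    have habs := abs_lt.mp (hh' k hkN)
    have hfp := hfpos k hkK
    have hf1 := hfle1 k hkK
    have hb2 : h k < ℓ + δ := by have h2 := habs.2; linarith
    linarith [hkey, mul_nonneg (by linarith : (0:ℝ) ≤ 1 - f k) (by linarith : (0:ℝ) ≤ ℓ + δ - q k),
      mul_nonneg hfp.le (by linarith : (0:ℝ) ≤ ℓ + δ - h k)]
  have inv_low : ∀ k, N0 ≤ k → ℓ - δ ≤ q k → ℓ - δ ≤ q (k + 1) := by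
    intro k hk hqk
    have hkK : K0 ≤ k := le_trans hN0K0 hk
    have hkN : N1 ≤ k := le_trans hN0N1 hk
    have hkey := key k hkK
    have habs := abs_lt.mp (hh' k hkN)
    have hfp := hfpos k hkK
    have hf1 := hfle1 k hkK
    have hb1 : ℓ - δ < h k := by have h1 := habs.1; linarith
    linarith [hkey, mul_nonneg (by linarith : (0:ℝ) ≤ 1 - f k) (by linarith : (0:ℝ) ≤ q k - (ℓ - δ)),
      mul_nonneg hfp.le (by linarith : (0:ℝ) ≤ h k - (ℓ - δ))]
  obtain ⟨k1, hk1N, hk1⟩ := entry_high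
  obtain ⟨k2, hk2N, hk2⟩ := entry_low
  have high : ∀ k, k1 ≤ k → q k ≤ ℓ + δ := by
    intro k hk
    induction k, hk using Nat.le_induction with
    | base => exact hk1
    | succ n hn ih => exact inv_high n (le_trans hk1N hn) ih
  have low : ∀ k, k2 ≤ k → ℓ - δ ≤ q k := by
    intro k hk
    induction k, hk using Nat.le_induction with
    | base => exact hk2
    | succ n hn ih => exact inv_low n (le_trans hk2N hn) ih
  refine ⟨max k1 k2, fun k hk => ?_⟩
  have h1 := high k (le_trans (le_max_left _ _) hk)
  have h2 := low k (le_trans (le_max_right _ _) hk)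
  rw [Real.dist_eq]
  have : |q k - ℓ| ≤ δ := abs_le.mpr ⟨by linarith, by linarith⟩
  simp only [hδdef] at this
  linarith
end

section
/- Let A₁, A₂ : H → 2^H be maximal monotone and define u^{k+1} := J_{M^{-1}A}(u^k) through the Douglas–Rachford operators A := [[A₁, I, −I], [−I, A₂, I], [I, −I, 0]] and M := C C* on H³ with C* := [I, −I, I]. Writing u^k = (x₁^k, x₂^k, v^k) and w^k := x₁^k − x₂^k + v^k, the fixed-point iteration u^{k+1} = J_{M^{-1}A}(u^k) is equivalent to the Douglas–Rachford recursion: x₁^{k+1} = J_{A₁}(w^k), x₂^{k+1} = J_{A₂}(2x₁^{k+1} − w^k), w^{k+1} = w^k + x₂^{k+1} − x₁^{k+1}. -/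
/-- The degenerate preconditioned proximal point iteration for the Douglas–Rachford
operators `A, M` on `H³` (with `M = CC*`, `C* = [I, −I, I]`) is equivalent to the
Douglas–Rachford recursion: writing `u = (x₁,x₂,v)`, `u' = (y₁,y₂,v')`,
`w = x₁ − x₂ + v`, `w' = y₁ − y₂ + v'`, the graph condition `Mu − Mu' ∈ A(u')`
holds iff `y₁ = J_{A₁}(w)`, `y₂ = J_{A₂}(2y₁ − w)` and `w' = w + (y₂ − y₁)`. -/
theorem stmt18 {H : Type*} [NormedAddCommGroup H] [InnerProductSpace ℝ H] [CompleteSpace H]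
    (A₁ A₂ : H → Set H) (J₁ J₂ : H → H)
    (hJ₁ : ∀ w z : H, J₁ w = z ↔ w - z ∈ A₁ z)
    (hJ₂ : ∀ w z : H, J₂ w = z ↔ w - z ∈ A₂ z)
    (x₁ x₂ v y₁ y₂ v' : H) :
    -- `Mu − Mu' = (w−w', −(w−w'), w−w')` and membership in `A(u')` componentwise:
    (((x₁ - x₂ + v) - (y₁ - y₂ + v')) - y₂ + v' ∈ A₁ y₁ ∧
      -((x₁ - x₂ + v) - (y₁ - y₂ + v')) + y₁ - v' ∈ A₂ y₂ ∧
      (x₁ - x₂ + v) - (y₁ - y₂ + v') = y₁ - y₂)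
    ↔ (y₁ = J₁ (x₁ - x₂ + v) ∧
       y₂ = J₂ (2 • y₁ - (x₁ - x₂ + v)) ∧
       y₁ - y₂ + v' = (x₁ - x₂ + v) + (y₂ - y₁)) := by
  have e1 : ((x₁ - x₂ + v) - (y₁ - y₂ + v')) - y₂ + v' = (x₁ - x₂ + v) - y₁ := by abel
  have e2 : -((x₁ - x₂ + v) - (y₁ - y₂ + v')) + y₁ - v'
      = (2 • y₁ - (x₁ - x₂ + v)) - y₂ := by abel
  rw [e1, e2, ← hJ₁, ← hJ₂]
  constructor
  · rintro ⟨h1, h2, h3⟩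
    refine ⟨h1.symm, h2.symm, ?_⟩
    have := h3
    rw [sub_eq_iff_eq_add] at this
    rw [this]; abel
  · rintro ⟨h1, h2, h3⟩
    refine ⟨h1.symm, h2.symm, ?_⟩
    rw [h3]; abel
end

section
/- Let M : H → H be a bounded self-adjoint positive semidefinite operator with closed range, factored as M = CC* with C : D → H an injective bounded operator from a Hilbert space D. Then C* is surjective. -/
/-!
Since `ker (C C†) = ker C†`, the closure of `range C` is `(ker C†)ᗮ = (ker M)ᗮ`, which is the
closure of `range M† = range M`. As `range M` is closed and contained in `range C`, the range of
`C` equals that of `M` and is closed. An injective operator with closed range is bounded below,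
so `C† C` is coercive and, by Lax–Milgram, surjective; a fortiori `C†` is surjective.
-/

open Function InnerProductSpace
open scoped InnerProduct

namespace ContinuousLinearMap

section RCLike

variable {𝕜 E F : Type*} [RCLike 𝕜]
  [NormedAddCommGroup E] [InnerProductSpace 𝕜 E] [CompleteSpace E]
  [NormedAddCommGroup F] [InnerProductSpace 𝕜 F] [CompleteSpace F]

theorem range_eq_range_self_comp_adjoint_of_isClosed (T : E →L[𝕜] F)
    (h : IsClosed (Set.range (T ∘L T†))) : Set.range T = Set.range (T ∘L T†) := by
  refine (Set.range_comp_subset_range _ _).antisymm' fun y hy => ?_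
  have hle : T.range ≤ (T ∘L T†).range := calc
    T.range ≤ T.range.topologicalClosure := Submodule.le_topologicalClosure _
    _ = T†.kerᗮ := by rw [orthogonal_ker, adjoint_adjoint]
    _ = (T ∘L T†).kerᗮ := by rw [ker_self_comp_adjoint]
    _ = (T ∘L T†).range.topologicalClosure := by
      rw [orthogonal_ker, adjoint_comp, adjoint_adjoint]
    _ = (T ∘L T†).range := h.submodule_topologicalClosure_eq
  exact hle hy

end RCLike

section Real

variable {E F : Type*}
  [NormedAddCommGroup E] [InnerProductSpace ℝ E] [CompleteSpace E]
  [NormedAddCommGroup F] [InnerProductSpace ℝ F] [CompleteSpace F]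

theorem isCoercive_innerSL_comp_adjoint_comp_self (T : E →L[ℝ] F) {c : ℝ} (hc : 0 < c)
    (hT : ∀ x, c * ‖x‖ ≤ ‖T x‖) : IsCoercive (innerSL ℝ ∘L (T† ∘L T)) := by
  refine ⟨c * c, by positivity, fun x => ?_⟩
  calc c * c * ‖x‖ * ‖x‖ = (c * ‖x‖) ^ 2 := by ring
    _ ≤ ‖T x‖ ^ 2 := by gcongr; exact hT x
    _ = ⟪(T†) (T x), x⟫_ℝ := by rw [adjoint_inner_left, real_inner_self_eq_norm_sq]

theorem continuousLinearMapOfBilin_innerSL_comp (A : E →L[ℝ] E) :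
    continuousLinearMapOfBilin (innerSL ℝ ∘L A) = A :=
  ext fun _ => (unique_continuousLinearMapOfBilin _ fun _ => rfl).symm

theorem surjective_adjoint_of_injective_of_isClosed_range (T : E →L[ℝ] F)
    (hinj : Injective T) (hclosed : IsClosed (Set.range T)) : Surjective (T†) := by
  obtain ⟨c, hc, hT⟩ := antilipschitzWith_iff_exists_mul_le_norm.mp
    (T.antilipschitz_of_injective_of_isClosed_range hinj hclosed)
  have hrange := (T.isCoercive_innerSL_comp_adjoint_comp_self hc hT).range_eq_top
  rw [continuousLinearMapOfBilin_innerSL_comp, LinearMap.range_eq_top] at hrange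
  exact Surjective.of_comp (g := T) hrange

end Real

end ContinuousLinearMap

theorem stmt19_general {H D : Type*}
    [NormedAddCommGroup H] [InnerProductSpace ℝ H] [CompleteSpace H]
    [NormedAddCommGroup D] [InnerProductSpace ℝ D] [CompleteSpace D]
    (M : H →L[ℝ] H) (C : D →L[ℝ] H)
    (hclosed : IsClosed (Set.range M))
    (hfact : M = C.comp (ContinuousLinearMap.adjoint C))
    (hCinj : Function.Injective C) :
    Function.Surjective (ContinuousLinearMap.adjoint C) := by
  subst hfact
  refine C.surjective_adjoint_of_injective_of_isClosed_range hCinj ?_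
  rwa [C.range_eq_range_self_comp_adjoint_of_isClosed hclosed]

/-- If `M = CC*` is an onto decomposition of a self-adjoint positive semidefinite
operator `M` with closed range, with `C` injective, then `C*` is surjective. -/
theorem stmt19 {H D : Type*}
    [NormedAddCommGroup H] [InnerProductSpace ℝ H] [CompleteSpace H]
    [NormedAddCommGroup D] [InnerProductSpace ℝ D] [CompleteSpace D]
    (M : H →L[ℝ] H) (C : D →L[ℝ] H)
    (hsa : IsSelfAdjoint M)
    (hpsd : ∀ x : H, 0 ≤ (inner ℝ x (M x) : ℝ))
    (hclosed : IsClosed (Set.range M))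
    (hfact : M = C.comp (ContinuousLinearMap.adjoint C))
    (hCinj : Function.Injective C) :
    Function.Surjective (ContinuousLinearMap.adjoint C) :=
  stmt19_general M C hclosed hfact hCinj
end
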